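/- Let M be an n×m matrix with integer entries, let R be the rook matrix of M regarded as a matrix over ℚ, and let (i,j) be a position with R_{i,j} ≠ 0 which is not covered with respect to R. Then for all unitriangular integer matrices A ∈ T_n(ℤ) and B ∈ T_m(ℤ) one has (A·M·B)_{i,j} = R_{i,j}; in particular this entry is independent of A and B. -/

import Mathlib

/-- A square matrix is unitriangular if it is upper triangular with 1's on the diagonal. -/
def Matrix.IsUnitriangular {n : ℕ} {R : Type*} [Zero R] [One R]
    (A : Matrix (Fin n) (Fin n) R) : Prop :=
  (∀ i, A i i = 1) ∧ ∀ i j : Fin n, j < i → A i j = 0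

/-- A matrix is a rook matrix if every row and every column contains
at most one nonzero entry. -/
def Matrix.IsRook {n m : ℕ} {F : Type*} [Zero F]
    (R : Matrix (Fin n) (Fin m) F) : Prop :=
  (∀ i j j', R i j ≠ 0 → R i j' ≠ 0 → j = j') ∧
  (∀ i i' j, R i j ≠ 0 → R i' j ≠ 0 → i = i')

/-- A position `(i,j)` is covered w.r.t. a (rook) matrix `R` if there is a nonzero
entry of `R` at a position `(i',j')` with (i < i' and j ≥ j') or (i ≤ i' and j > j'). -/
def Matrix.Covered {n m : ℕ} {F : Type*} [Zero F]
    (R : Matrix (Fin n) (Fin m) F) (i : Fin n) (j : Fin m) : Prop :=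
  ∃ i' j', R i' j' ≠ 0 ∧ ((i < i' ∧ j' ≤ j) ∨ (i ≤ i' ∧ j' < j))

/-! For unitriangular `A` and `B`, the lower-left quadrant `{(k, l) | i ≤ k, l ≤ j}` of
`A * M * B` depends only on the same quadrant of `M`. A position `(i, j)` is not
covered exactly when `M` vanishes on this quadrant except at `(i, j)`; the triple-sum expansion
then collapses to `(A * M * B) k l = A k i * M i j * B j l` on the quadrant, so `(i, j)` stays
non-covered in `A * M * B` and keeps its entry. Since unitriangular matrices are closed under
inversion, this carries the entry of `R` back to `M` over `ℚ` and then forward to every integral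
`A * M * B`. -/

namespace Matrix

variable {n m : ℕ}

theorem not_covered_iff {F : Type*} [Zero F] {R : Matrix (Fin n) (Fin m) F} {i : Fin n}
    {j : Fin m} :
    ¬ R.Covered i j ↔ ∀ k l, i ≤ k → l ≤ j → (k, l) ≠ (i, j) → R k l = 0 := by
  have hquadrant : ∀ k l,
      ((i < k ∧ l ≤ j) ∨ (i ≤ k ∧ l < j)) ↔ (i ≤ k ∧ l ≤ j ∧ (k, l) ≠ (i, j)) :=
    fun k l => by grind
  simp only [Covered, hquadrant]
  grind

section Unitriangular

variable {R : Type*}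

theorem IsUnitriangular.isUpperTriangular [Zero R] [One R] {A : Matrix (Fin n) (Fin n) R}
    (hA : A.IsUnitriangular) : A.IsUpperTriangular :=
  fun i j h => hA.2 i j h

theorem IsUnitriangular.map [NonAssocSemiring R] {S : Type*} [NonAssocSemiring S]
    {A : Matrix (Fin n) (Fin n) R} (hA : A.IsUnitriangular) (f : R →+* S) :
    (A.map f).IsUnitriangular :=
  ⟨fun i => by simp [hA.1 i], fun i j h => by simp [hA.2 i j h]⟩

theorem IsUnitriangular.det [CommRing R] {A : Matrix (Fin n) (Fin n) R}
    (hA : A.IsUnitriangular) : A.det = 1 := by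
  simp [det_of_isUpperTriangular hA.isUpperTriangular, hA.1]

theorem IsUnitriangular.isUnit_det [CommRing R] {A : Matrix (Fin n) (Fin n) R}
    (hA : A.IsUnitriangular) : IsUnit A.det :=
  hA.det ▸ isUnit_one

theorem IsUpperTriangular.mul_apply_self {ι : Type*} [Fintype ι] [LinearOrder ι]
    [NonUnitalNonAssocSemiring R] {A B : Matrix ι ι R} (hA : A.IsUpperTriangular)
    (hB : B.IsUpperTriangular) (i : ι) : (A * B) i i = A i i * B i i := by
  rw [mul_apply]
  refine Fintype.sum_eq_single i fun k hk => ?_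
  rcases hk.lt_or_gt with hk | hk
  · rw [hA hk, zero_mul]
  · rw [hB hk, mul_zero]

theorem IsUnitriangular.inv [CommRing R] {A : Matrix (Fin n) (Fin n) R}
    (hA : A.IsUnitriangular) : A⁻¹.IsUnitriangular := by
  have : Invertible A := invertibleOfIsUnitDet A hA.isUnit_det
  have hA' : A⁻¹.IsUpperTriangular :=
    blockTriangular_inv_of_blockTriangular hA.isUpperTriangular
  refine ⟨fun i => ?_, fun i j h => hA' h⟩
  simpa [hA.1 i, inv_mul_of_invertible] using (hA'.mul_apply_self hA.isUpperTriangular i).symm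

end Unitriangular

section NotCovered

variable {R : Type*} [Semiring R] {A : Matrix (Fin n) (Fin n) R} {B : Matrix (Fin m) (Fin m) R}
  {M : Matrix (Fin n) (Fin m) R} {i : Fin n} {j : Fin m}

theorem mul_mul_apply_eq_sum_prod (A : Matrix (Fin n) (Fin n) R) (M : Matrix (Fin n) (Fin m) R)
    (B : Matrix (Fin m) (Fin m) R) (k : Fin n) (l : Fin m) :
    (A * M * B) k l = ∑ p : Fin n × Fin m, A k p.1 * M p.1 p.2 * B p.2 l := by
  simp only [mul_apply, Finset.sum_mul, Fintype.sum_prod_type]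
  exact Finset.sum_comm

theorem IsUnitriangular.mul_mul_apply_of_not_covered (hA : A.IsUnitriangular)
    (hB : B.IsUnitriangular) (hM : ¬ M.Covered i j) {k : Fin n} {l : Fin m} (hk : i ≤ k)
    (hl : l ≤ j) : (A * M * B) k l = A k i * M i j * B j l := by
  rw [mul_mul_apply_eq_sum_prod]
  refine Fintype.sum_eq_single (i, j) fun ⟨k', l'⟩ hne => ?_
  by_cases hkk' : k' < k
  · rw [hA.2 k k' hkk', zero_mul, zero_mul]
  by_cases hll' : l < l'
  · rw [hB.2 l' l hll', mul_zero]
  rw [not_covered_iff.1 hM k' l' (hk.trans (not_lt.1 hkk')) ((not_lt.1 hll').trans hl) hne,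
    mul_zero, zero_mul]

theorem not_covered_unitriangular_mul_mul (hA : A.IsUnitriangular) (hB : B.IsUnitriangular)
    (hM : ¬ M.Covered i j) : ¬ (A * M * B).Covered i j := by
  refine not_covered_iff.2 fun k l hk hl hne => ?_
  rw [hA.mul_mul_apply_of_not_covered hB hM hk hl]
  rcases hk.lt_or_eq with hk | rfl
  · rw [hA.2 k i hk, zero_mul, zero_mul]
  · rw [hB.2 j l (hl.lt_of_ne fun h => hne (by rw [h])), mul_zero]

theorem unitriangular_mul_mul_apply_of_not_covered (hA : A.IsUnitriangular)
    (hB : B.IsUnitriangular) (hM : ¬ M.Covered i j) : (A * M * B) i j = M i j := by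
  rw [hA.mul_mul_apply_of_not_covered hB hM le_rfl le_rfl, hA.1, hB.1, one_mul, mul_one]

end NotCovered

end Matrix

theorem noncovered_entry_invariant_general {n m : ℕ}
    (M : Matrix (Fin n) (Fin m) ℤ) (R : Matrix (Fin n) (Fin m) ℚ)
    (hRorb : ∃ (A : Matrix (Fin n) (Fin n) ℚ) (B : Matrix (Fin m) (Fin m) ℚ),
      A.IsUnitriangular ∧ B.IsUnitriangular ∧
      A * M.map (Int.cast : ℤ → ℚ) * B = R)
    (i : Fin n) (j : Fin m) (hnc : ¬ R.Covered i j) :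
    ∀ (A : Matrix (Fin n) (Fin n) ℤ) (B : Matrix (Fin m) (Fin m) ℤ),
      A.IsUnitriangular → B.IsUnitriangular → ((A * M * B) i j : ℚ) = R i j := by
  obtain ⟨A₀, B₀, hA₀, hB₀, hR⟩ := hRorb
  have hMR : M.map (Int.cast : ℤ → ℚ) = A₀⁻¹ * R * B₀⁻¹ := by
    rw [← hR, Matrix.mul_assoc A₀⁻¹, Matrix.mul_nonsing_inv_cancel_right _ _ hB₀.isUnit_det,
      Matrix.nonsing_inv_mul_cancel_left _ _ hA₀.isUnit_det]
  have hM : ¬ (M.map (Int.cast : ℤ → ℚ)).Covered i j := by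
    rw [hMR]; exact Matrix.not_covered_unitriangular_mul_mul hA₀.inv hB₀.inv hnc
  have hMij : (M.map (Int.cast : ℤ → ℚ)) i j = R i j := by
    rw [hMR]; exact Matrix.unitriangular_mul_mul_apply_of_not_covered hA₀.inv hB₀.inv hnc
  intro A B hA hB
  let φ := Int.castRingHom ℚ
  calc ((A * M * B) i j : ℚ) = (A.map φ * M.map φ * B.map φ) i j := by
        simp only [← Matrix.map_mul]; rfl
    _ = R i j :=
        (Matrix.unitriangular_mul_mul_apply_of_not_covered (hA.map _) (hB.map _) hM).trans hMij

/-- At a non-covered position carrying a nonzero entry of the rook matrix `R` of an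
integer matrix `M` over `ℚ`, every matrix `A * M * B` in the integral unitriangular
orbit of `M` has entry equal to that of `R`. -/
theorem noncovered_entry_invariant {n m : ℕ}
    (M : Matrix (Fin n) (Fin m) ℤ) (R : Matrix (Fin n) (Fin m) ℚ)
    (hRrook : R.IsRook)
    (hRorb : ∃ (A : Matrix (Fin n) (Fin n) ℚ) (B : Matrix (Fin m) (Fin m) ℚ),
      A.IsUnitriangular ∧ B.IsUnitriangular ∧
      A * M.map (Int.cast : ℤ → ℚ) * B = R)
    (i : Fin n) (j : Fin m) (hij : R i j ≠ 0) (hnc : ¬ R.Covered i j) :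
    ∀ (A : Matrix (Fin n) (Fin n) ℤ) (B : Matrix (Fin m) (Fin m) ℤ),
      A.IsUnitriangular → B.IsUnitriangular → ((A * M * B) i j : ℚ) = R i j :=
  noncovered_entry_invariant_general M R hRorb i j hnc
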